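/- Let φ be an Orlicz function with lim_{u→∞} φ(u)/u = ∞ (e.g. an N-function). Then for every nonzero x in the Orlicz–Lorentz space with ‖x‖° = 1, the set K(x) = {k > 0 : ‖x‖° = (1/k)(1 + ρ_{φ,ω}(kx))} is nonempty; in particular k** = sup{k > 0 : ∫₀^∞ ψ(p(k x*(t))) ω(t) dt ≤ 1} is finite. -/

import Mathlib

open MeasureTheory Set Filter
open scoped ENNReal

/-- Distribution function `μ_f(λ) = μ{s ∈ (0,∞) : |f s| > λ}`. -/
noncomputable def distrib (f : ℝ → ℝ) (lam : ℝ≥0∞) : ℝ≥0∞ :=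
  volume {s ∈ Set.Ioi (0 : ℝ) | lam < ENNReal.ofReal |f s|}

/-- Decreasing rearrangement `f*(t) = inf {λ : μ_f(λ) ≤ t}`. -/
noncomputable def rearr (f : ℝ → ℝ) (t : ℝ) : ℝ≥0∞ :=
  sInf {lam : ℝ≥0∞ | distrib f lam ≤ ENNReal.ofReal t}

/-- Extension of an Orlicz function to `ℝ≥0∞` (Orlicz functions tend to `∞` at `∞`). -/
noncomputable def phiE (φ : ℝ → ℝ) (a : ℝ≥0∞) : ℝ≥0∞ :=
  if a = ∞ then ∞ else ENNReal.ofReal (φ a.toReal)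

/-- The Orlicz–Lorentz modular `ρ_{φ,ω}(f) = ∫₀^∞ φ(f*(t)) ω(t) dt`. -/
noncomputable def rho (φ ω f : ℝ → ℝ) : ℝ≥0∞ :=
  ∫⁻ t in Set.Ioi (0 : ℝ), phiE φ (rearr f t) * ENNReal.ofReal (ω t)

/-- The Luxemburg norm `‖f‖ = inf {λ > 0 : ρ_{φ,ω}(f/λ) ≤ 1}`. -/
noncomputable def luxNorm (φ ω f : ℝ → ℝ) : ℝ≥0∞ :=
  sInf (Set.image (fun lam : ℝ => ENNReal.ofReal lam)
    {lam : ℝ | 0 < lam ∧ rho φ ω (fun t => lam⁻¹ * f t) ≤ 1})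

/-- The Orlicz norm `‖f‖° = inf_{k>0} (1/k)(1 + ρ_{φ,ω}(k f))`. -/
noncomputable def orliczNorm (φ ω f : ℝ → ℝ) : ℝ≥0∞ :=
  ⨅ k ∈ Set.Ioi (0 : ℝ), ENNReal.ofReal k⁻¹ * (1 + rho φ ω (fun t => k * f t))

open scoped Topology

/-! For `k > 0` let `F k = k⁻¹ (1 + ρ(k x))`, where `ρ(k x) = ∫ φ(k x*) ω`. Since `ρ(k x)` is
monotone in `k` and left-continuous by monotone convergence, `F` is lower semicontinuous on
`(0, ∞)`. As `x ≠ 0`, `x* ≥ r > 0` on some `(0, d]`, so superlinearity of `φ` gives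
`F k ≥ k⁻¹ φ(k r) ω(d) d → ∞` as `k → ∞`, while `F k ≥ k⁻¹` blows up at `0`; hence `F` attains
its infimum `‖x‖°` on a compact interval. Likewise `ψ(v) ≥ v - φ(1)` and `p(u) ≥ φ(u)/u → ∞` give
`∫ ψ(p(k x*)) ω ≥ (p(k r) - φ(1)) ω(d) d → ∞`, which bounds `k**`. Finiteness of `x*`, used in
both parts, follows from `ρ(k x) < ∞` for some `k`. -/

lemma ConvexOn.monotoneOn_Ici_of_le {f : ℝ → ℝ} {a : ℝ} (hf : ConvexOn ℝ (Ici a) f)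
    (ha : ∀ u ≥ a, f a ≤ f u) : MonotoneOn f (Ici a) := by
  intro u hu v hv huv
  rcases (mem_Ici.mp hu).eq_or_lt with rfl | hau
  · exact ha v hv
  · exact hf.le_right_of_left_le'' self_mem_Ici hv hau huv (ha u hu)

lemma LowerSemicontinuousOn.exists_isMinOn_of_le_off {α β : Type*} [TopologicalSpace α]
    [LinearOrder β] {f : α → β} {s K : Set α} (hKs : K ⊆ s) (hK : IsCompact K)
    (hf : LowerSemicontinuousOn f K) {x₀ : α} (hx₀ : x₀ ∈ K) (hoff : ∀ x ∈ s \ K, f x₀ ≤ f x) :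
    ∃ x ∈ s, IsMinOn f s x := by
  obtain ⟨x, hxK, hmin⟩ := hf.exists_isMinOn ⟨x₀, hx₀⟩ hK
  refine ⟨x, hKs hxK, isMinOn_iff.mpr fun y hy => ?_⟩
  by_cases hyK : y ∈ K
  · exact isMinOn_iff.mp hmin y hyK
  · exact (isMinOn_iff.mp hmin x₀ hx₀).trans (hoff y ⟨hy, hyK⟩)

lemma lowerSemicontinuousAt_ofReal_inv_mul {H : ℝ → ℝ≥0∞} (hmono : Monotone H) {k : ℝ}
    (hk : 0 < k) (hH : ContinuousWithinAt H (Iio k) k) :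
    LowerSemicontinuousAt (fun c => ENNReal.ofReal c⁻¹ * H c) k := by
  intro y hy
  obtain ⟨c, hyc, hck⟩ : ∃ c, y < ENNReal.ofReal k⁻¹ * H c ∧ c < k :=
    (((ENNReal.Tendsto.const_mul hH (Or.inr ENNReal.ofReal_ne_top)).eventually
      (lt_mem_nhds hy)).and self_mem_nhdsWithin).exists
  have hcont : Tendsto (fun c' => ENNReal.ofReal c'⁻¹ * H c) (𝓝 k)
      (𝓝 (ENNReal.ofReal k⁻¹ * H c)) :=
    ENNReal.Tendsto.mul_const ((ENNReal.continuous_ofReal.tendsto _).comp (tendsto_inv₀ hk.ne'))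
      (Or.inl (ENNReal.ofReal_pos.mpr (inv_pos.mpr hk)).ne')
  filter_upwards [hcont.eventually (lt_mem_nhds hyc), lt_mem_nhds hck] with c' h1 h2
  exact h1.trans_le (mul_le_mul' le_rfl (hmono h2.le))

lemma continuousWithinAt_Iio_lintegral {α : Type*} [MeasurableSpace α] {μ : Measure α}
    {f : ℝ → α → ℝ≥0∞} {k : ℝ} (hmeas : ∀ c, AEMeasurable (f c) μ)
    (hmono : ∀ a, Monotone (f · a)) (hcont : ∀ᵐ a ∂μ, ContinuousWithinAt (f · a) (Iio k) k) :
    ContinuousWithinAt (fun c => ∫⁻ a, f c a ∂μ) (Iio k) k := by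
  have hG : Monotone fun c => ∫⁻ a, f c a ∂μ := fun c₁ c₂ h => lintegral_mono fun a => hmono a h
  obtain ⟨u, hu_mono, hu_lt, hu_lim⟩ := exists_seq_strictMono_tendsto k
  have hu : Tendsto u atTop (𝓝[<] k) :=
    tendsto_nhdsWithin_of_tendsto_nhds_of_eventually_within _ hu_lim (Eventually.of_forall hu_lt)
  have hMCT : Tendsto (fun n => ∫⁻ a, f (u n) a ∂μ) atTop (𝓝 (∫⁻ a, f k a ∂μ)) :=
    lintegral_tendsto_of_tendsto_of_monotone (fun n => hmeas _)
      (ae_of_all _ fun a i j hij => hmono a (hu_mono.monotone hij))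
      (hcont.mono fun a ha => ha.tendsto.comp hu)
  have hlim := hG.tendsto_nhdsLT k
  rwa [ContinuousWithinAt, ← tendsto_nhds_unique (hlim.comp hu) hMCT]

lemma mul_ofReal_le_setLIntegral_Ioi {f : ℝ → ℝ≥0∞} {c : ℝ≥0∞} {d : ℝ}
    (h : ∀ t ∈ Ioc 0 d, c ≤ f t) : c * ENNReal.ofReal d ≤ ∫⁻ t in Ioi 0, f t :=
  calc c * ENNReal.ofReal d = ∫⁻ _ in Ioc 0 d, c := by
        rw [setLIntegral_const, Real.volume_Ioc, sub_zero]
    _ ≤ ∫⁻ t in Ioc 0 d, f t := setLIntegral_mono' measurableSet_Ioc h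
    _ ≤ ∫⁻ t in Ioi 0, f t := lintegral_mono_set Ioc_subset_Ioi_self

section Rearrangement

lemma distrib_antitone (f : ℝ → ℝ) : Antitone (distrib f) :=
  fun _ _ hab => measure_mono fun _ hs => ⟨hs.1, hab.trans_lt hs.2⟩

lemma rearr_antitone (f : ℝ → ℝ) : Antitone (rearr f) :=
  fun _ _ hab => sInf_le_sInf fun _ hlam => hlam.trans (ENNReal.ofReal_le_ofReal hab)

lemma distrib_const_mul (f : ℝ → ℝ) {k : ℝ} (hk : 0 < k) (lam : ℝ≥0∞) :
    distrib (fun s => k * f s) lam = distrib f (lam / ENNReal.ofReal k) := by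
  have h0 : ENNReal.ofReal k ≠ 0 := (ENNReal.ofReal_pos.mpr hk).ne'
  simp only [distrib, abs_mul, abs_of_pos hk, ENNReal.ofReal_mul hk.le,
    ENNReal.div_lt_iff (Or.inl h0) (Or.inl ENNReal.ofReal_ne_top), mul_comm]

lemma rearr_const_mul (f : ℝ → ℝ) {k : ℝ} (hk : 0 < k) (t : ℝ) :
    rearr (fun s => k * f s) t = ENNReal.ofReal k * rearr f t := by
  have h0 : ENNReal.ofReal k ≠ 0 := (ENNReal.ofReal_pos.mpr hk).ne'
  have hu : IsUnit (ENNReal.ofReal k) := ENNReal.isUnit_iff.mpr ⟨h0, ENNReal.ofReal_ne_top⟩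
  have he : ∀ lam, (ENNReal.mulLeftOrderIso _ hu).symm lam = lam / ENNReal.ofReal k :=
    fun lam => (OrderIso.symm_apply_eq _).mpr (ENNReal.mul_div_cancel h0 ENNReal.ofReal_ne_top).symm
  rw [rearr, rearr, ← ENNReal.mulLeftOrderIso_apply _ hu, OrderIso.map_sInf, ← sInf_image,
    OrderIso.image_eq_preimage_symm]
  simp only [preimage_ofPred_eq, he, distrib_const_mul f hk]

lemma exists_distrib_ofReal_ne_zero {f : ℝ → ℝ}
    (hf : volume {t ∈ Ioi (0 : ℝ) | f t ≠ 0} ≠ 0) : ∃ r > 0, distrib f (ENNReal.ofReal r) ≠ 0 := by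
  by_contra! h
  refine hf (measure_mono_null ?_
    (measure_iUnion_null fun n : ℕ => h (1 / (n + 1)) (by positivity)))
  rintro s ⟨hs, hfs⟩
  obtain ⟨n, hn⟩ := exists_nat_one_div_lt (abs_pos.mpr hfs)
  exact mem_iUnion.mpr ⟨n, hs, (ENNReal.ofReal_lt_ofReal_iff (abs_pos.mpr hfs)).mpr hn⟩

lemma exists_ofReal_le_rearr {f : ℝ → ℝ} {r : ℝ} (hr : distrib f (ENNReal.ofReal r) ≠ 0) :
    ∃ d > 0, ∀ t ∈ Ioc 0 d, ENNReal.ofReal r ≤ rearr f t := by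
  obtain ⟨d, -, hd0, hd⟩ := ENNReal.lt_iff_exists_real_btwn.mp (pos_iff_ne_zero.mpr hr)
  refine ⟨d, ENNReal.ofReal_pos.mp hd0, fun t ht => le_sInf fun lam hlam => ?_⟩
  exact ((distrib_antitone f).reflect_lt
    (hlam.trans_lt ((ENNReal.ofReal_le_ofReal ht.2).trans_lt hd))).le

end Rearrangement

section Modular

variable {φ ω : ℝ → ℝ}

lemma phiE_ofReal (φ : ℝ → ℝ) {u : ℝ} (hu : 0 ≤ u) :
    phiE φ (ENNReal.ofReal u) = ENNReal.ofReal (φ u) := by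
  rw [phiE, if_neg ENNReal.ofReal_ne_top, ENNReal.toReal_ofReal hu]

lemma phiE_monotone (hφ : MonotoneOn φ (Ici 0)) : Monotone (phiE φ) := by
  intro a b hab
  rcases eq_or_ne b ∞ with rfl | hb
  · simp [phiE]
  · have ha : a ≠ ∞ := ne_top_of_le_ne_top hb hab
    rw [phiE, if_neg ha, phiE, if_neg hb]
    exact ENNReal.ofReal_le_ofReal (hφ ENNReal.toReal_nonneg ENNReal.toReal_nonneg
      (ENNReal.toReal_mono hb hab))

lemma continuousAt_phiE_ofReal_mul (hφ : ContinuousOn φ (Ioi 0)) {a : ℝ≥0∞} (ha : a ≠ ∞)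
    {k : ℝ} (hk : 0 < k) : ContinuousAt (fun c => phiE φ (ENNReal.ofReal c * a)) k := by
  set s := a.toReal
  have has : a = ENNReal.ofReal s := (ENNReal.ofReal_toReal ha).symm
  have heq : (fun c => ENNReal.ofReal (φ (c * s))) =ᶠ[𝓝 k]
      fun c => phiE φ (ENNReal.ofReal c * a) := by
    filter_upwards [lt_mem_nhds hk] with c hc
    rw [has, ← ENNReal.ofReal_mul hc.le, phiE_ofReal φ (by positivity)]
  refine ContinuousAt.congr (ENNReal.continuous_ofReal.continuousAt.comp ?_) heq
  rcases (show 0 ≤ s from ENNReal.toReal_nonneg).eq_or_lt with hs | hs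
  · simp only [← hs, mul_zero]
    exact continuousAt_const
  · exact (hφ.continuousAt (Ioi_mem_nhds (mul_pos hk hs))).comp (x := k)
      (continuous_mul_const s).continuousAt

/-- `ρ_{φ,ω}(k x)` computed from `x*` (see `rho_const_mul`); through `ofReal k` it is monotone
in `k` on all of `ℝ`. -/
noncomputable def rhoMul (φ ω x : ℝ → ℝ) (k : ℝ) : ℝ≥0∞ :=
  ∫⁻ t in Ioi 0, phiE φ (ENNReal.ofReal k * rearr x t) * ENNReal.ofReal (ω t)

variable {x : ℝ → ℝ}

lemma rho_const_mul {k : ℝ} (hk : 0 < k) : rho φ ω (fun t => k * x t) = rhoMul φ ω x k := by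
  simp only [rho, rhoMul, rearr_const_mul x hk]

lemma rhoMul_monotone (hφ : MonotoneOn φ (Ici 0)) : Monotone (rhoMul φ ω x) :=
  fun _ _ h => lintegral_mono fun _ =>
    mul_le_mul' (phiE_monotone hφ (mul_le_mul' (ENNReal.ofReal_le_ofReal h) le_rfl)) le_rfl

lemma continuousWithinAt_Iio_rhoMul (hφ : MonotoneOn φ (Ici 0)) (hφc : ContinuousOn φ (Ioi 0))
    (hω : AntitoneOn ω (Ioi 0)) (hfin : ∀ t > 0, rearr x t ≠ ∞) {k : ℝ} (hk : 0 < k) :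
    ContinuousWithinAt (rhoMul φ ω x) (Iio k) k := by
  refine continuousWithinAt_Iio_lintegral (fun c => ?_) (fun t c₁ c₂ h => ?_) ?_
  · exact ((phiE_monotone hφ).comp_antitone fun s t hst =>
      mul_le_mul' le_rfl (rearr_antitone x hst)).measurable.aemeasurable.mul
      (ENNReal.measurable_ofReal.comp_aemeasurable
        (aemeasurable_restrict_of_antitoneOn measurableSet_Ioi hω))
  · exact mul_le_mul' (phiE_monotone hφ (mul_le_mul' (ENNReal.ofReal_le_ofReal h) le_rfl)) le_rfl
  · filter_upwards [ae_restrict_mem measurableSet_Ioi] with t ht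
    exact ContinuousAt.continuousWithinAt <| ENNReal.Tendsto.mul_const
      (continuousAt_phiE_ofReal_mul hφc (hfin t ht) hk) (Or.inr ENNReal.ofReal_ne_top)

lemma ofReal_mul_le_rhoMul (hφ : MonotoneOn φ (Ici 0)) (hφnn : ∀ u ≥ 0, 0 ≤ φ u)
    (hω : AntitoneOn ω (Ioi 0)) {k r d : ℝ} (hk : 0 ≤ k) (hr : 0 ≤ r) (hd : 0 < d)
    (hx : ∀ t ∈ Ioc 0 d, ENNReal.ofReal r ≤ rearr x t) :
    ENNReal.ofReal (φ (k * r) * ω d) * ENNReal.ofReal d ≤ rhoMul φ ω x k := by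
  refine mul_ofReal_le_setLIntegral_Ioi fun t ht => ?_
  rw [ENNReal.ofReal_mul (hφnn _ (mul_nonneg hk hr)), ← phiE_ofReal φ (mul_nonneg hk hr),
    ENNReal.ofReal_mul hk]
  exact mul_le_mul' (phiE_monotone hφ (mul_le_mul' le_rfl (hx t ht)))
    (ENNReal.ofReal_le_ofReal (hω ht.1 hd ht.2))

lemma rearr_ne_top_of_rhoMul_ne_top (hωpos : ∀ t > 0, 0 < ω t)
    {k : ℝ} (hk : 0 < k) (h : rhoMul φ ω x k ≠ ∞) {t : ℝ} (ht : 0 < t) : rearr x t ≠ ∞ := by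
  intro htop
  have hinf : ∀ s ∈ Ioc 0 t, ∞ ≤ phiE φ (ENNReal.ofReal k * rearr x s) * ENNReal.ofReal (ω s) :=
    fun s hs => by
      have hs_top : rearr x s = ∞ := top_le_iff.mp (htop ▸ rearr_antitone x hs.2)
      simp [phiE, hs_top, ENNReal.mul_top, hk, hωpos s hs.1]
  refine h (eq_top_iff.mpr ?_)
  calc ∞ = ∞ * ENNReal.ofReal t := (ENNReal.top_mul (ENNReal.ofReal_pos.mpr ht).ne').symm
    _ ≤ rhoMul φ ω x k := mul_ofReal_le_setLIntegral_Ioi hinf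

end Modular

section OrliczNorm

variable {φ ω x : ℝ → ℝ}

lemma rearr_ne_top_of_orliczNorm_ne_top (hωpos : ∀ t > 0, 0 < ω t)
    (h : orliczNorm φ ω x ≠ ∞) {t : ℝ} (ht : 0 < t) : rearr x t ≠ ∞ := by
  obtain ⟨k, hk, hlt⟩ : ∃ k ∈ Ioi (0 : ℝ),
      ENNReal.ofReal k⁻¹ * (1 + rho φ ω (fun t => k * x t)) < ∞ := by
    simpa only [orliczNorm, iInf_lt_iff, exists_prop] using h.lt_top
  refine rearr_ne_top_of_rhoMul_ne_top (φ := φ) hωpos hk (fun htop => hlt.ne ?_) ht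
  rw [rho_const_mul hk, htop, add_top, ENNReal.mul_top]
  exact (ENNReal.ofReal_pos.mpr (inv_pos.mpr hk)).ne'

lemma tendsto_ofReal_inv_mul_rhoMul_atTop (hφ : MonotoneOn φ (Ici 0))
    (hφnn : ∀ u ≥ 0, 0 ≤ φ u) (hφ_lim : Tendsto (fun u => φ u / u) atTop atTop)
    (hω : AntitoneOn ω (Ioi 0)) (hωpos : ∀ t > 0, 0 < ω t) {r d : ℝ} (hr : 0 < r) (hd : 0 < d)
    (hx : ∀ t ∈ Ioc 0 d, ENNReal.ofReal r ≤ rearr x t) :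
    Tendsto (fun k => ENNReal.ofReal k⁻¹ * rhoMul φ ω x k) atTop (𝓝 ∞) := by
  have hωd := hωpos d hd
  have hlim : Tendsto (fun k => r * (φ (k * r) / (k * r)) * (ω d * d)) atTop atTop :=
    ((hφ_lim.comp (tendsto_id.atTop_mul_const hr)).const_mul_atTop hr).atTop_mul_const
      (mul_pos hωd hd)
  refine tendsto_nhds_top_mono (ENNReal.tendsto_ofReal_atTop.comp hlim) ?_
  filter_upwards [eventually_gt_atTop 0] with k hk
  calc ENNReal.ofReal (r * (φ (k * r) / (k * r)) * (ω d * d))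
      = ENNReal.ofReal k⁻¹ * (ENNReal.ofReal (φ (k * r) * ω d) * ENNReal.ofReal d) := by
        rw [← ENNReal.ofReal_mul (mul_nonneg (hφnn _ (by positivity)) hωd.le),
          ← ENNReal.ofReal_mul (by positivity)]
        congr 1
        field_simp
    _ ≤ _ := mul_le_mul' le_rfl (ofReal_mul_le_rhoMul hφ hφnn hω hk.le hr.le hd hx)

theorem exists_orliczNorm_eq (hφ : MonotoneOn φ (Ici 0)) (hφc : ContinuousOn φ (Ioi 0))
    (hφnn : ∀ u ≥ 0, 0 ≤ φ u) (hφ_lim : Tendsto (fun u => φ u / u) atTop atTop)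
    (hω : AntitoneOn ω (Ioi 0)) (hωpos : ∀ t > 0, 0 < ω t) {r d : ℝ} (hr : 0 < r) (hd : 0 < d)
    (hx : ∀ t ∈ Ioc 0 d, ENNReal.ofReal r ≤ rearr x t) (hnorm : orliczNorm φ ω x ≠ ∞) :
    ∃ k > 0, orliczNorm φ ω x = ENNReal.ofReal k⁻¹ * (1 + rho φ ω (fun t => k * x t)) := by
  set F : ℝ → ℝ≥0∞ := fun k => ENNReal.ofReal k⁻¹ * (1 + rhoMul φ ω x k)
  have hnormF : orliczNorm φ ω x = ⨅ k ∈ Ioi 0, F k :=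
    iInf_congr fun k => iInf_congr fun hk => by rw [rho_const_mul hk]
  obtain ⟨M, -, hM, -⟩ := ENNReal.lt_iff_exists_real_btwn.mp hnorm.lt_top
  have hMpos : 0 < M := ENNReal.ofReal_pos.mp (pos_of_gt hM)
  obtain ⟨k₀, hk₀, hk₀M⟩ : ∃ k₀ ∈ Ioi (0 : ℝ), F k₀ < ENNReal.ofReal M := by
    simpa only [hnormF, iInf_lt_iff, exists_prop] using hM
  obtain ⟨b, hb⟩ := eventually_atTop.mp ((tendsto_ofReal_inv_mul_rhoMul_atTop hφ hφnn hφ_lim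
    hω hωpos hr hd hx).eventually (lt_mem_nhds ENNReal.ofReal_lt_top))
  have hoff : ∀ k ∈ Ioi 0 \ Icc M⁻¹ b, ENNReal.ofReal M ≤ F k := by
    rintro k ⟨hk, hkK⟩
    rcases not_and_or.mp hkK with hlo | hhi
    · calc ENNReal.ofReal M ≤ ENNReal.ofReal k⁻¹ * 1 := by
            rw [mul_one]
            exact ENNReal.ofReal_le_ofReal (le_inv_of_le_inv₀ hk (not_le.mp hlo).le)
        _ ≤ F k := mul_le_mul' le_rfl le_self_add
    · exact (hb k (not_le.mp hhi).le).le.trans (mul_le_mul' le_rfl le_add_self)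
  have hlsc : LowerSemicontinuousOn F (Icc M⁻¹ b) := fun k hk =>
    have hk0 : 0 < k := (inv_pos.mpr hMpos).trans_le hk.1
    (lowerSemicontinuousAt_ofReal_inv_mul ((rhoMul_monotone hφ).const_add 1) hk0
      ((continuousWithinAt_Iio_rhoMul hφ hφc hω
        (fun t ht => rearr_ne_top_of_orliczNorm_ne_top hωpos hnorm ht) hk0).const_add 1)
      ).lowerSemicontinuousWithinAt _
  have hk₀K : k₀ ∈ Icc M⁻¹ b := by
    by_contra h
    exact (hoff k₀ ⟨hk₀, h⟩).not_gt hk₀M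
  obtain ⟨k, hk, hmin⟩ := hlsc.exists_isMinOn_of_le_off
    (fun k hk => (inv_pos.mpr hMpos).trans_le hk.1) isCompact_Icc hk₀K
    fun k hk => hk₀M.le.trans (hoff k hk)
  refine ⟨k, hk, ?_⟩
  rw [rho_const_mul hk, hnormF]
  exact le_antisymm (biInf_le _ hk) (le_iInf₂ fun k' hk' => isMinOn_iff.mp hmin k' hk')

end OrliczNorm

section Conjugate

variable {φ : ℝ → ℝ}

lemma div_le_of_eq_setIntegral {p : ℝ → ℝ} (hpmono : MonotoneOn p (Ici 0))
    (hpnn : ∀ u ≥ 0, 0 ≤ p u) (hφint : ∀ u ≥ 0, φ u = ∫ t in Ioc 0 u, p t) {u : ℝ}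
    (hu : 0 < u) : φ u / u ≤ p u := by
  rw [div_le_iff₀ hu, hφint u hu.le]
  calc ∫ t in Ioc 0 u, p t ≤ ‖∫ t in Ioc 0 u, p t‖ := Real.le_norm_self _
    _ ≤ p u * volume.real (Ioc 0 u) :=
        norm_setIntegral_le_of_norm_le_const measure_Ioc_lt_top fun t ht => by
          rw [Real.norm_of_nonneg (hpnn t ht.1.le)]
          exact hpmono ht.1.le hu.le ht.2
    _ = p u * u := by rw [Real.volume_real_Ioc_of_le hu.le, sub_zero]

lemma bddAbove_image_mul_sub (hφnn : ∀ u ≥ 0, 0 ≤ φ u)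
    (hφ_lim : Tendsto (fun u => φ u / u) atTop atTop) {v : ℝ} (hv : 0 ≤ v) :
    BddAbove ((fun u => u * v - φ u) '' Ioi 0) := by
  obtain ⟨U, hU⟩ := eventually_atTop.mp (hφ_lim.eventually_ge_atTop v)
  refine ⟨max U 0 * v, forall_mem_image.mpr fun u (hu : 0 < u) => ?_⟩
  rcases le_or_gt u (max U 0) with h | h
  · nlinarith [hφnn u hu.le]
  · have := (le_div_iff₀ hu).mp (hU u ((le_max_left _ _).trans h.le))
    nlinarith [le_max_right U 0]

lemma sub_le_of_eq_sSup {ψ : ℝ → ℝ} (hφnn : ∀ u ≥ 0, 0 ≤ φ u)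
    (hφ_lim : Tendsto (fun u => φ u / u) atTop atTop)
    (hψ : ∀ v ≥ 0, ψ v = sSup ((fun u => u * v - φ u) '' Ioi 0)) {v : ℝ} (hv : 0 ≤ v) :
    v - φ 1 ≤ ψ v := by
  rw [hψ v hv]
  simpa using le_csSup (bddAbove_image_mul_sub hφnn hφ_lim hv)
    (mem_image_of_mem _ (mem_Ioi.mpr one_pos))

theorem bddAbove_setOf_lintegral_le_one {ψ p ω x : ℝ → ℝ} (hφnn : ∀ u ≥ 0, 0 ≤ φ u)
    (hφ_lim : Tendsto (fun u => φ u / u) atTop atTop) (hpmono : MonotoneOn p (Ici 0))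
    (hpnn : ∀ u ≥ 0, 0 ≤ p u) (hφint : ∀ u ≥ 0, φ u = ∫ t in Ioc 0 u, p t)
    (hψ : ∀ v ≥ 0, ψ v = sSup ((fun u => u * v - φ u) '' Ioi 0))
    (hω : AntitoneOn ω (Ioi 0)) (hωpos : ∀ t > 0, 0 < ω t) {r d : ℝ} (hr : 0 < r) (hd : 0 < d)
    (hx : ∀ t ∈ Ioc 0 d, ENNReal.ofReal r ≤ rearr x t)
    (hfin : ∀ t ∈ Ioc 0 d, rearr x t ≠ ∞) :
    BddAbove {k : ℝ | 0 < k ∧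
      (∫⁻ t in Ioi 0, ENNReal.ofReal (ψ (p (k * (rearr x t).toReal)) * ω t)) ≤ 1} := by
  have hωd := hωpos d hd
  have hp : Tendsto p atTop atTop := tendsto_atTop_mono' _
    ((eventually_gt_atTop 0).mono fun u hu => div_le_of_eq_setIntegral hpmono hpnn hφint hu)
    hφ_lim
  obtain ⟨b, hb⟩ := eventually_atTop.mp
    ((hp.comp (tendsto_id.atTop_mul_const hr)).eventually_gt_atTop (φ 1 + (ω d * d)⁻¹))
  refine ⟨max b 0, fun k ⟨hk, hint⟩ => le_of_not_gt fun hlt => ?_⟩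
  set A := p (k * r) - φ 1
  have hA : (ω d * d)⁻¹ < A := by
    have := hb k ((le_max_left _ _).trans hlt.le)
    simp only [Function.comp_apply, id] at this
    linarith
  have hApos : 0 < A := (inv_pos.mpr (mul_pos hωd hd)).trans hA
  have hlow : ENNReal.ofReal (A * ω d) * ENNReal.ofReal d ≤
      ∫⁻ t in Ioi 0, ENNReal.ofReal (ψ (p (k * (rearr x t).toReal)) * ω t) :=
    mul_ofReal_le_setLIntegral_Ioi fun t ht => by
      have hs : r ≤ (rearr x t).toReal :=
        (ENNReal.ofReal_le_iff_le_toReal (hfin t ht)).mp (hx t ht)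
      have hpk : p (k * r) ≤ p (k * (rearr x t).toReal) :=
        hpmono (mem_Ici.mpr (by positivity)) (mem_Ici.mpr (by positivity)) (by gcongr)
      have hψk := sub_le_of_eq_sSup hφnn hφ_lim hψ
        (hpnn _ (by positivity : 0 ≤ k * (rearr x t).toReal))
      exact ENNReal.ofReal_le_ofReal
        (mul_le_mul (by linarith) (hω ht.1 hd ht.2) hωd.le (by linarith))
  have hgt : 1 < ENNReal.ofReal (A * ω d) * ENNReal.ofReal d := by
    rw [← ENNReal.ofReal_mul (mul_pos hApos hωd).le, ← ENNReal.ofReal_one,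
      ENNReal.ofReal_lt_ofReal_iff (mul_pos (mul_pos hApos hωd) hd)]
    calc 1 = (ω d * d)⁻¹ * (ω d * d) := (inv_mul_cancel₀ (by positivity)).symm
      _ < A * (ω d * d) := mul_lt_mul_of_pos_right hA (by positivity)
      _ = A * ω d * d := by ring
  exact (hgt.trans_le (hlow.trans hint)).false

end Conjugate

theorem K_nonempty_of_N_function_general (φ ψ p ω x : ℝ → ℝ)
    (hconv : ConvexOn ℝ (Set.Ici 0) φ) (hφ0 : φ 0 = 0)
    (hφpos : ∀ u > (0 : ℝ), 0 < φ u)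
    (hNinf : Tendsto (fun u => φ u / u) atTop atTop)
    (hpmono : MonotoneOn p (Set.Ici 0)) (hpnn : ∀ u ≥ (0 : ℝ), 0 ≤ p u)
    (hφint : ∀ u ≥ (0 : ℝ), φ u = ∫ t in Set.Ioc (0 : ℝ) u, p t)
    (hψ : ∀ v ≥ (0 : ℝ), ψ v = sSup (Set.image (fun u => u * v - φ u) (Set.Ioi (0 : ℝ))))
    (hωanti : AntitoneOn ω (Set.Ioi 0)) (hωpos : ∀ t > (0 : ℝ), 0 < ω t)
    (hxne : volume {t ∈ Set.Ioi (0 : ℝ) | x t ≠ 0} ≠ 0)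
    (hxnorm : orliczNorm φ ω x = 1) :
    (∃ k : ℝ, 0 < k ∧
      orliczNorm φ ω x = ENNReal.ofReal k⁻¹ * (1 + rho φ ω (fun t => k * x t))) ∧
    BddAbove {k : ℝ | 0 < k ∧
      (∫⁻ t in Set.Ioi (0 : ℝ),
        ENNReal.ofReal (ψ (p (k * (rearr x t).toReal)) * ω t)) ≤ 1} := by
  have hφnn : ∀ u ≥ (0 : ℝ), 0 ≤ φ u := fun u hu =>
    hu.eq_or_lt.elim (fun h => h ▸ hφ0.ge) fun h => (hφpos u h).le
  have hφmono : MonotoneOn φ (Ici 0) :=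
    hconv.monotoneOn_Ici_of_le fun u hu => hφ0.trans_le (hφnn u hu)
  have hφcont : ContinuousOn φ (Ioi 0) :=
    (hconv.subset Ioi_subset_Ici_self (convex_Ioi 0)).continuousOn isOpen_Ioi
  have hnorm : orliczNorm φ ω x ≠ ∞ := hxnorm ▸ ENNReal.one_ne_top
  obtain ⟨r, hr, hdistrib⟩ := exists_distrib_ofReal_ne_zero hxne
  obtain ⟨d, hd, hxr⟩ := exists_ofReal_le_rearr hdistrib
  exact ⟨exists_orliczNorm_eq hφmono hφcont hφnn hNinf hωanti hωpos hr hd hxr hnorm,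
    bddAbove_setOf_lintegral_le_one hφnn hNinf hpmono hpnn hφint hψ hωanti hωpos hr hd hxr
      fun t ht => rearr_ne_top_of_orliczNorm_ne_top hωpos hnorm ht.1⟩

/-- If `φ` is an N-function (`φ(u)/u → 0` at `0`, `φ(u)/u → ∞` at `∞`),
with right-derivative `p` and complementary function `ψ`, then for every nonzero `x` in
the Orlicz–Lorentz space with `‖x‖° = 1`, the set
`K(x) = {k > 0 : ‖x‖° = (1/k)(1 + ρ_{φ,ω}(kx))}` is nonempty; in particular
`k** = sup {k > 0 : ∫₀^∞ ψ(p(k x*(t))) ω(t) dt ≤ 1}` is finite. -/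
theorem K_nonempty_of_N_function (φ ψ p ω x : ℝ → ℝ)
    (hconv : ConvexOn ℝ (Set.Ici 0) φ) (hφ0 : φ 0 = 0)
    (hφpos : ∀ u > (0 : ℝ), 0 < φ u)
    (hN0 : Tendsto (fun u => φ u / u) (nhdsWithin 0 (Set.Ioi 0)) (nhds 0))
    (hNinf : Tendsto (fun u => φ u / u) atTop atTop)
    (hpmono : MonotoneOn p (Set.Ici 0)) (hpnn : ∀ u ≥ (0 : ℝ), 0 ≤ p u)
    (hφint : ∀ u ≥ (0 : ℝ), φ u = ∫ t in Set.Ioc (0 : ℝ) u, p t)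
    (hψ : ∀ v ≥ (0 : ℝ), ψ v = sSup (Set.image (fun u => u * v - φ u) (Set.Ioi (0 : ℝ))))
    (hωanti : AntitoneOn ω (Set.Ioi 0)) (hωpos : ∀ t > (0 : ℝ), 0 < ω t)
    (hωloc : ∀ b > (0 : ℝ), ∫⁻ t in Set.Ioc (0 : ℝ) b, ENNReal.ofReal (ω t) < ∞)
    (hW : ∫⁻ t in Set.Ioi (0 : ℝ), ENNReal.ofReal (ω t) = ∞)
    (hxmeas : Measurable x)
    (hxne : volume {t ∈ Set.Ioi (0 : ℝ) | x t ≠ 0} ≠ 0)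
    (hxnorm : orliczNorm φ ω x = 1) :
    (∃ k : ℝ, 0 < k ∧
      orliczNorm φ ω x = ENNReal.ofReal k⁻¹ * (1 + rho φ ω (fun t => k * x t))) ∧
    BddAbove {k : ℝ | 0 < k ∧
      (∫⁻ t in Set.Ioi (0 : ℝ),
        ENNReal.ofReal (ψ (p (k * (rearr x t).toReal)) * ω t)) ≤ 1} :=
  K_nonempty_of_N_function_general φ ψ p ω x hconv hφ0 hφpos hNinf hpmono hpnn hφint hψ hωanti hωpos
    hxne hxnorm
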